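/- Let X, Y, Z be real-valued random variables on a probability space such that all products of at most three of X, Y, Z are integrable, and suppose σ_X² = Var(X) > 0, σ_Y² = Var(Y) > 0, σ_Z² = Var(Z) > 0. Let a, b, c be real constants and set φ_X = (E[X]−a)/σ_X, φ_Y = (E[Y]−b)/σ_Y, φ_Z = (E[Z]−c)/σ_Z, ρ_{XYZ} = E[(X−E[X])(Y−E[Y])(Z−E[Z])]/(σ_X σ_Y σ_Z), and ρ_{UV} = Cov(U,V)/(σ_U σ_V) for each pair. Then E[(X−a)(Y−b)(Z−c)] / √(E[(X−a)²]·E[(Y−b)²]·E[(Z−c)²]) = (ρ_{XYZ} + ρ_{XY}·φ_Z + ρ_{YZ}·φ_X + ρ_{XZ}·φ_Y + φ_X·φ_Y·φ_Z) / (√(1+φ_X²)·√(1+φ_Y²)·√(1+φ_Z²)). -/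

import Mathlib

/-!
Write `X - a = (X - E X) + (E X - a)` and similarly for `Y`, `Z`. Expanding the product, every term
linear in a centred variable has mean zero, so `E[(X-a)(Y-b)(Z-c)]` is the central third moment plus
the three covariances weighted by the shifts plus the product of the shifts, and
`E[(X-a)²] = σ_X² + (E X - a)² = σ_X² (1 + φ_X²)`. Dividing numerator and denominator by
`σ_X σ_Y σ_Z` gives the normalized form.
-/

open MeasureTheory

/-- Expectation of a real random variable. -/
noncomputable def expVal {Ω : Type*} [MeasurableSpace Ω] (μ : Measure Ω) (X : Ω → ℝ) : ℝ :=
  ∫ ω, X ω ∂μ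

/-- Covariance `Cov(X,Y) = E[(X − E[X])(Y − E[Y])]`. -/
noncomputable def covVal {Ω : Type*} [MeasurableSpace Ω] (μ : Measure Ω) (X Y : Ω → ℝ) : ℝ :=
  ∫ ω, (X ω - expVal μ X) * (Y ω - expVal μ Y) ∂μ

/-- Variance `Var(X) = E[(X − E[X])²]`. -/
noncomputable def varVal {Ω : Type*} [MeasurableSpace Ω] (μ : Measure Ω) (X : Ω → ℝ) : ℝ :=
  ∫ ω, (X ω - expVal μ X) ^ 2 ∂μ

section Moments

variable {Ω : Type*} [MeasurableSpace Ω] {μ : Measure Ω} [IsProbabilityMeasure μ] {X Y Z : Ω → ℝ}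

lemma integral_sub_mul_sub (hX : Integrable X μ) (hY : Integrable Y μ)
    (hXY : Integrable (fun ω => X ω * Y ω) μ) (a b : ℝ) :
    ∫ ω, (X ω - a) * (Y ω - b) ∂μ =
      (∫ ω, X ω * Y ω ∂μ) - b * (∫ ω, X ω ∂μ) - a * (∫ ω, Y ω ∂μ) + a * b := by
  have h : (fun ω => (X ω - a) * (Y ω - b))
      = fun ω => X ω * Y ω - b * X ω - a * Y ω + a * b := by
    ext ω; ring
  rw [h]
  simp (disch := fun_prop) only [integral_add, integral_sub, integral_const_mul, integral_const,
    probReal_univ, one_smul]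

lemma integral_sub_mul_sub_mul_sub (hX : Integrable X μ) (hY : Integrable Y μ)
    (hZ : Integrable Z μ) (hXY : Integrable (fun ω => X ω * Y ω) μ)
    (hXZ : Integrable (fun ω => X ω * Z ω) μ) (hYZ : Integrable (fun ω => Y ω * Z ω) μ)
    (hXYZ : Integrable (fun ω => X ω * Y ω * Z ω) μ) (a b c : ℝ) :
    ∫ ω, (X ω - a) * (Y ω - b) * (Z ω - c) ∂μ =
      (∫ ω, X ω * Y ω * Z ω ∂μ) - c * (∫ ω, X ω * Y ω ∂μ) - b * (∫ ω, X ω * Z ω ∂μ)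
        - a * (∫ ω, Y ω * Z ω ∂μ) + b * c * (∫ ω, X ω ∂μ) + a * c * (∫ ω, Y ω ∂μ)
        + a * b * (∫ ω, Z ω ∂μ) - a * b * c := by
  have h : (fun ω => (X ω - a) * (Y ω - b) * (Z ω - c))
      = fun ω => X ω * Y ω * Z ω - c * (X ω * Y ω) - b * (X ω * Z ω) - a * (Y ω * Z ω)
          + b * c * X ω + a * c * Y ω + a * b * Z ω - a * b * c := by
    ext ω; ring
  rw [h]
  simp (disch := fun_prop) only [integral_add, integral_sub, integral_const_mul, integral_const,
    probReal_univ, one_smul]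

lemma integral_sub_sq_eq_varVal_add (hX : Integrable X μ)
    (hXX : Integrable (fun ω => X ω * X ω) μ) (a : ℝ) :
    ∫ ω, (X ω - a) ^ 2 ∂μ = varVal μ X + (expVal μ X - a) ^ 2 := by
  simp only [varVal, sq, integral_sub_mul_sub hX hX hXX, expVal]
  ring

lemma integral_sub_mul_sub_mul_sub_eq_central_add (hX : Integrable X μ) (hY : Integrable Y μ)
    (hZ : Integrable Z μ) (hXY : Integrable (fun ω => X ω * Y ω) μ)
    (hXZ : Integrable (fun ω => X ω * Z ω) μ) (hYZ : Integrable (fun ω => Y ω * Z ω) μ)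
    (hXYZ : Integrable (fun ω => X ω * Y ω * Z ω) μ) (a b c : ℝ) :
    ∫ ω, (X ω - a) * (Y ω - b) * (Z ω - c) ∂μ =
      (∫ ω, (X ω - expVal μ X) * (Y ω - expVal μ Y) * (Z ω - expVal μ Z) ∂μ)
        + covVal μ X Y * (expVal μ Z - c) + covVal μ Y Z * (expVal μ X - a)
        + covVal μ X Z * (expVal μ Y - b)
        + (expVal μ X - a) * (expVal μ Y - b) * (expVal μ Z - c) := by
  simp only [covVal, integral_sub_mul_sub_mul_sub hX hY hZ hXY hXZ hYZ hXYZ,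
    integral_sub_mul_sub hX hY hXY, integral_sub_mul_sub hX hZ hXZ,
    integral_sub_mul_sub hY hZ hYZ, expVal]
  ring

end Moments

lemma Real.sqrt_sq_add_sq_eq_mul_sqrt_one_add {σ : ℝ} (hσ : 0 < σ) (d : ℝ) :
    √(σ ^ 2 + d ^ 2) = σ * √(1 + (d / σ) ^ 2) := by
  rw [← Real.sqrt_sq hσ.le, ← Real.sqrt_mul (sq_nonneg σ), Real.sqrt_sq hσ.le]
  congr 1
  field_simp

/-- Normalized representation of the three-variate total local dependence function:
`E[(X−a)(Y−b)(Z−c)] / √(E[(X−a)²]·E[(Y−b)²]·E[(Z−c)²])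
 = (ρ_{XYZ} + ρ_{XY}φ_Z + ρ_{YZ}φ_X + ρ_{XZ}φ_Y + φ_X φ_Y φ_Z)
   /(√(1+φ_X²)·√(1+φ_Y²)·√(1+φ_Z²))`. -/
theorem trivariate_localDependence_normalized_form {Ω : Type*} [MeasurableSpace Ω]
    (μ : Measure Ω) [IsProbabilityMeasure μ] (X Y Z : Ω → ℝ)
    (hX : Integrable X μ) (hY : Integrable Y μ) (hZ : Integrable Z μ)
    (hXY : Integrable (fun ω => X ω * Y ω) μ)
    (hXZ : Integrable (fun ω => X ω * Z ω) μ)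
    (hYZ : Integrable (fun ω => Y ω * Z ω) μ)
    (hXYZ : Integrable (fun ω => X ω * Y ω * Z ω) μ)
    (hXX : Integrable (fun ω => X ω * X ω) μ)
    (hYY : Integrable (fun ω => Y ω * Y ω) μ)
    (hZZ : Integrable (fun ω => Z ω * Z ω) μ)
    (hVarX : 0 < varVal μ X) (hVarY : 0 < varVal μ Y) (hVarZ : 0 < varVal μ Z)
    (a b c : ℝ) (σX σY σZ φX φY φZ ρXYZ ρXY ρXZ ρYZ : ℝ)
    (hσX : σX = Real.sqrt (varVal μ X)) (hσY : σY = Real.sqrt (varVal μ Y))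
    (hσZ : σZ = Real.sqrt (varVal μ Z))
    (hφX : φX = (expVal μ X - a) / σX) (hφY : φY = (expVal μ Y - b) / σY)
    (hφZ : φZ = (expVal μ Z - c) / σZ)
    (hρXYZ : ρXYZ =
      (∫ ω, (X ω - expVal μ X) * (Y ω - expVal μ Y) * (Z ω - expVal μ Z) ∂μ) /
        (σX * σY * σZ))
    (hρXY : ρXY = covVal μ X Y / (σX * σY))
    (hρXZ : ρXZ = covVal μ X Z / (σX * σZ))
    (hρYZ : ρYZ = covVal μ Y Z / (σY * σZ)) :
    (∫ ω, (X ω - a) * (Y ω - b) * (Z ω - c) ∂μ) /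
        Real.sqrt ((∫ ω, (X ω - a) ^ 2 ∂μ) * (∫ ω, (Y ω - b) ^ 2 ∂μ) *
          (∫ ω, (Z ω - c) ^ 2 ∂μ)) =
      (ρXYZ + ρXY * φZ + ρYZ * φX + ρXZ * φY + φX * φY * φZ) /
        (Real.sqrt (1 + φX ^ 2) * Real.sqrt (1 + φY ^ 2) * Real.sqrt (1 + φZ ^ 2)) := by
  have hσX₀ : 0 < σX := hσX ▸ Real.sqrt_pos.2 hVarX
  have hσY₀ : 0 < σY := hσY ▸ Real.sqrt_pos.2 hVarY
  have hσZ₀ : 0 < σZ := hσZ ▸ Real.sqrt_pos.2 hVarZ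
  have hvX : varVal μ X = σX ^ 2 := by rw [hσX, Real.sq_sqrt hVarX.le]
  have hvY : varVal μ Y = σY ^ 2 := by rw [hσY, Real.sq_sqrt hVarY.le]
  have hvZ : varVal μ Z = σZ ^ 2 := by rw [hσZ, Real.sq_sqrt hVarZ.le]
  rw [integral_sub_mul_sub_mul_sub_eq_central_add hX hY hZ hXY hXZ hYZ hXYZ,
    integral_sub_sq_eq_varVal_add hX hXX, integral_sub_sq_eq_varVal_add hY hYY,
    integral_sub_sq_eq_varVal_add hZ hZZ, hvX, hvY, hvZ,
    Real.sqrt_mul (by positivity), Real.sqrt_mul (by positivity),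
    Real.sqrt_sq_add_sq_eq_mul_sqrt_one_add hσX₀, Real.sqrt_sq_add_sq_eq_mul_sqrt_one_add hσY₀,
    Real.sqrt_sq_add_sq_eq_mul_sqrt_one_add hσZ₀]
  subst hφX hφY hφZ hρXYZ hρXY hρXZ hρYZ
  field_simp
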